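/- Let p ≥ 1 and l ≥ 0 be integers, set m = 2^l, and let f ∈ Ω be monotone. Then the number of points of the refined grid {i/(2m) : i = 0, 1, …, 2m}^p that lie in the uncertain region determined by the coarse grid satisfies card( {i/(2m) : i = 0, …, 2m}^p ∩ U( {i/m : i = 0, …, m}^p , f) ) ≤ p·(2m + 1)^{p−1}. -/

import Mathlib

open MeasureTheory Set

/-- The uncertain region `U(D, f)` on the cube `[0,1]^p`. -/
def uncertainRegion (p : ℕ) (D : Set (Fin p → ℝ)) (f : (Fin p → ℝ) → ℝ) :
    Set (Fin p → ℝ) :=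
  Icc 0 1 \ ((⋃ x ∈ {y ∈ D | f y = -1}, Icc (0 : Fin p → ℝ) x) ∪
             (⋃ x ∈ {y ∈ D | f y = 1}, Icc x (1 : Fin p → ℝ)))

/-- `Ω`: monotone `{-1,1}`-valued functions on the cube `[0,1]^p`. -/
def OmegaSet (p : ℕ) : Set ((Fin p → ℝ) → ℝ) :=
  {f | MonotoneOn f (Icc 0 1) ∧ ∀ x ∈ Icc (0 : Fin p → ℝ) 1, f x = -1 ∨ f x = 1}

/-- The grid `{i/m : i = 0, 1, …, m}^p` with `(m+1)^p` points. -/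
def dyGrid (p m : ℕ) : Set (Fin p → ℝ) :=
  {x | ∀ k, ∃ i : ℕ, i ≤ m ∧ x k = (i : ℝ) / (m : ℝ)}

/-!
Index the refined grid by `a ∈ {0, …, 2m}^p`. If two uncertain refined points had indices
`a` and `a + t·𝟙` with `t ≥ 1`, rounding the lower one up and the upper one down to the coarse
grid would give coarse points `u ≤ v`. The lower point escapes `[0, u]` only if `f u = 1`,
the upper one escapes `[v, 1]` only if `f v = -1`, contradicting monotonicity. So every
diagonal line `{a + t·𝟙}` meets the uncertain region at most once, and a diagonal line of
`{0, …, 2m}^p` is determined by its point with a vanishing coordinate; there are at most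
`p (2m + 1)^(p-1)` of those.
-/

section DiagonalCount

variable {p N : ℕ}

def boundedVanishing (p N : ℕ) : Finset (Fin p → ℕ) :=
  Finset.univ.biUnion fun k =>
    Fintype.piFinset fun j => if j = k then {0} else Finset.range (N + 1)

lemma mem_boundedVanishing {g : Fin p → ℕ} :
    g ∈ boundedVanishing p N ↔ (∀ k, g k ≤ N) ∧ ∃ k, g k = 0 := by
  simp only [boundedVanishing, Finset.mem_biUnion, Finset.mem_univ, true_and,
    Fintype.mem_piFinset]
  constructor
  · rintro ⟨k, hk⟩
    refine ⟨fun j => ?_, k, by simpa using hk k⟩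
    have := hk j
    split_ifs at this with hj
    · simp_all
    · simpa [Nat.lt_succ_iff] using this
  · rintro ⟨hN, k, hk⟩
    refine ⟨k, fun j => ?_⟩
    by_cases hj : j = k
    · simp [hj, hk]
    · simpa [hj, Nat.lt_succ_iff] using hN j

lemma card_boundedVanishing_le : (boundedVanishing p N).card ≤ p * (N + 1) ^ (p - 1) := by
  calc (boundedVanishing p N).card
      ≤ ∑ k : Fin p, (N + 1) ^ (p - 1) := by
        refine Finset.card_biUnion_le.trans (Finset.sum_le_sum fun k _ => ?_)
        simp [Fintype.card_piFinset, apply_ite Finset.card, Finset.prod_ite, Finset.filter_ne',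
          Finset.card_erase_of_mem]
    _ = p * (N + 1) ^ (p - 1) := by simp

noncomputable def subInf (a : Fin p → ℕ) : Fin p → ℕ := fun k => a k - ⨅ j, a j

lemma subInf_add_iInf (a : Fin p → ℕ) (k : Fin p) : subInf a k + ⨅ j, a j = a k :=
  Nat.sub_add_cancel (ciInf_le (OrderBot.bddBelow _) k)

lemma exists_subInf_eq_zero (hp : 0 < p) (a : Fin p → ℕ) : ∃ k, subInf a k = 0 := by
  have : Nonempty (Fin p) := ⟨⟨0, hp⟩⟩
  obtain ⟨k, hk⟩ := exists_eq_ciInf_of_finite (f := a)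
  exact ⟨k, by simp [subInf, hk]⟩

lemma eq_add_of_subInf_eq {a b : Fin p → ℕ} (hab : subInf a = subInf b)
    (hle : (⨅ j, a j) ≤ ⨅ j, b j) (k : Fin p) : b k = a k + ((⨅ j, b j) - ⨅ j, a j) := by
  have := congrFun hab k
  have := subInf_add_iInf a k
  have := subInf_add_iInf b k
  omega

theorem ncard_le_of_diagonal_injective (hp : 0 < p) {A : Set (Fin p → ℕ)}
    (hAN : ∀ a ∈ A, ∀ k, a k ≤ N)
    (hA : ∀ a ∈ A, ∀ b ∈ A, ∀ t : ℕ, (∀ k, b k = a k + t) → a = b) :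
    A.ncard ≤ p * (N + 1) ^ (p - 1) := by
  have hinj : InjOn subInf A := by
    intro a ha b hb hab
    rcases le_total (⨅ j, a j) (⨅ j, b j) with hle | hle
    · exact hA a ha b hb _ (eq_add_of_subInf_eq hab hle)
    · exact (hA b hb a ha _ (eq_add_of_subInf_eq hab.symm hle)).symm
  have hmaps : subInf '' A ⊆ boundedVanishing p N := by
    rintro _ ⟨a, ha, rfl⟩
    exact mem_boundedVanishing.2
      ⟨fun k => (Nat.sub_le _ _).trans (hAN a ha k), exists_subInf_eq_zero hp a⟩
  calc A.ncard = (subInf '' A).ncard := hinj.ncard_image.symm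
    _ ≤ (boundedVanishing p N : Set (Fin p → ℕ)).ncard := Set.ncard_le_ncard hmaps
    _ ≤ p * (N + 1) ^ (p - 1) := by
        rw [Set.ncard_coe_finset]; exact card_boundedVanishing_le

end DiagonalCount

section Grid

variable {p : ℕ}

noncomputable def gridPoint (m : ℕ) (i : Fin p → ℕ) : Fin p → ℝ := fun k => (i k : ℝ) / m

lemma gridPoint_mono (m : ℕ) : Monotone (gridPoint (p := p) m) := fun _ _ h k => by
  unfold gridPoint; gcongr; exact h k

lemma gridPoint_two_mul_le {m : ℕ} {a c : Fin p → ℕ} (h : ∀ k, a k ≤ 2 * c k) :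
    gridPoint (2 * m) a ≤ gridPoint m c := fun k => by
  simp only [gridPoint, Nat.cast_mul, Nat.cast_ofNat, ← div_div]
  gcongr
  rw [div_le_iff₀ two_pos]
  exact_mod_cast (h k).trans_eq (mul_comm _ _)

lemma le_gridPoint_two_mul {m : ℕ} {c b : Fin p → ℕ} (h : ∀ k, 2 * c k ≤ b k) :
    gridPoint m c ≤ gridPoint (2 * m) b := fun k => by
  simp only [gridPoint, Nat.cast_mul, Nat.cast_ofNat, ← div_div]
  gcongr
  rw [le_div_iff₀ two_pos]
  exact_mod_cast (mul_comm _ _).trans_le (h k)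

lemma dyGrid_eq_image (p m : ℕ) : dyGrid p m = gridPoint m '' {i | ∀ k, i k ≤ m} := by
  ext x
  constructor
  · intro hx
    choose i hi hxi using hx
    exact ⟨i, hi, funext fun k => (hxi k).symm⟩
  · rintro ⟨i, hi, rfl⟩ k
    exact ⟨i k, hi k, rfl⟩

lemma gridPoint_mem_dyGrid {m : ℕ} {i : Fin p → ℕ} (hi : ∀ k, i k ≤ m) :
    gridPoint m i ∈ dyGrid p m := by
  rw [dyGrid_eq_image]; exact mem_image_of_mem _ hi

lemma dyGrid_subset_Icc (p m : ℕ) : dyGrid p m ⊆ Icc 0 1 := by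
  rw [dyGrid_eq_image]
  rintro _ ⟨i, hi, rfl⟩
  refine ⟨fun k => by unfold gridPoint; positivity, fun k => ?_⟩
  exact div_le_one_of_le₀ (Nat.cast_le.2 (hi k)) (Nat.cast_nonneg m)

end Grid

lemma notMem_uncertainRegion_of_le_of_le {p : ℕ} {f : (Fin p → ℝ) → ℝ} (hf : f ∈ OmegaSet p)
    {D : Set (Fin p → ℝ)} (hD : D ⊆ Icc 0 1) {x u v y : Fin p → ℝ} (hu : u ∈ D) (hv : v ∈ D)
    (hx : x ∈ uncertainRegion p D f) (hxu : x ≤ u) (huv : u ≤ v) (hvy : v ≤ y) :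
    y ∉ uncertainRegion p D f := by
  intro hy
  have hfu : f u = 1 := (hf.2 u (hD hu)).resolve_left fun h =>
    hx.2 (Or.inl (mem_biUnion ⟨hu, h⟩ ⟨hx.1.1, hxu⟩))
  have hfv : f v = -1 := (hf.2 v (hD hv)).resolve_right fun h =>
    hy.2 (Or.inr (mem_biUnion ⟨hv, h⟩ ⟨hvy, hy.1.2⟩))
  have := hf.1 (hD hu) (hD hv) huv
  rw [hfu, hfv] at this
  norm_num at this

lemma eq_of_gridPoint_mem_uncertainRegion {p m : ℕ} {f : (Fin p → ℝ) → ℝ}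
    (hf : f ∈ OmegaSet p) {a b : Fin p → ℕ} (haN : ∀ k, a k ≤ 2 * m) (hbN : ∀ k, b k ≤ 2 * m)
    (ha : gridPoint (2 * m) a ∈ uncertainRegion p (dyGrid p m) f)
    (hb : gridPoint (2 * m) b ∈ uncertainRegion p (dyGrid p m) f)
    {t : ℕ} (hab : ∀ k, b k = a k + t) : a = b := by
  rcases Nat.eq_zero_or_pos t with rfl | ht
  · exact funext fun k => (hab k).symm
  refine absurd hb (notMem_uncertainRegion_of_le_of_le hf (dyGrid_subset_Icc p m)
    (u := gridPoint m fun k => (a k + 1) / 2) (v := gridPoint m fun k => b k / 2)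
    (gridPoint_mem_dyGrid fun k => ?_) (gridPoint_mem_dyGrid fun k => ?_) ha
    (gridPoint_two_mul_le fun k => ?_) (gridPoint_mono m fun k => ?_)
    (le_gridPoint_two_mul fun k => ?_))
  all_goals beta_reduce; have := haN k; have := hbN k; have := hab k; omega

/-- Single refinement step bound: with `m = 2^l`, the number of points of the refined
grid `{i/(2m)}^p` lying in the uncertain region of the coarse grid `{i/m}^p` is at most
`p (2m + 1)^(p-1)`. -/
theorem refined_grid_uncertain_card_le (p l : ℕ) (hp : 1 ≤ p)
    (f : (Fin p → ℝ) → ℝ) (hf : f ∈ OmegaSet p) :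
    (dyGrid p (2 * 2 ^ l) ∩ uncertainRegion p (dyGrid p (2 ^ l)) f).ncard
      ≤ p * (2 * 2 ^ l + 1) ^ (p - 1) := by
  set A := {i : Fin p → ℕ | ∀ k, i k ≤ 2 * 2 ^ l} ∩
    gridPoint (2 * 2 ^ l) ⁻¹' uncertainRegion p (dyGrid p (2 ^ l)) f
  have hA : A.Finite :=
    (Fintype.piFinset fun _ => Finset.range (2 * 2 ^ l + 1)).finite_toSet.subset fun i hi =>
      Fintype.mem_piFinset.2 fun k => Finset.mem_range_succ_iff.2 (hi.1 k)
  rw [dyGrid_eq_image, ← image_inter_preimage]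
  calc (gridPoint (2 * 2 ^ l) '' A).ncard ≤ A.ncard := ncard_image_le hA
    _ ≤ p * (2 * 2 ^ l + 1) ^ (p - 1) :=
      ncard_le_of_diagonal_injective hp (fun a ha => ha.1) fun a ha b hb _ hab =>
        eq_of_gridPoint_mem_uncertainRegion hf ha.1 hb.1 ha.2 hb.2 hab
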